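/- arXiv:2011.10399 — 7 statements merged into one kernel-verified Lean document; each statement's English description precedes it below -/
import Mathlib

section
/- For a Borel probability measure μ on [0,∞), the map t ↦ ∫₀^∞ C_μ(-x/t) e^{-x} dx is strictly increasing (when μ ≠ δ_0) and continuous on (0,∞), tends to log μ({0}) as t → 0⁺ (with log 0 = -∞), and tends to 0 as t → ∞. -/
/-!
Write `C = cgf id μ`, so the function in question is `t ↦ ∫₀^∞ C(-x/t) e^{-x} dx`. On `(-∞, 0]`
the cumulant transform `C` is continuous, nonpositive and nondecreasing (strictly unless
`μ = δ₀`), and `s K + log μ(-∞, K] ≤ C(s)` shows that `|C|` grows at most linearly. Hence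
`(a x / τ + b) e^{-x}` dominates the integrand uniformly in `t ≥ τ`, which gives continuity and,
since `C(-x/t) → C(0) = 0`, the limit `0` at infinity. As `t → 0⁺`, `e^{su} → 1_{u = 0}` gives
`C(-x/t) → log μ{0}`: if `μ{0} > 0` then `C ≥ log μ{0}` is bounded and dominated convergence
applies again, while if `μ{0} = 0` monotonicity bounds the integral by `C(-1/t) / e → -∞`.
-/

open MeasureTheory Set Filter Real Topology ProbabilityTheory

lemma integral_lt_integral_of_ae_le_of_measure_setOf_lt_ne_zero {α : Type*} [MeasurableSpace α]
    {μ : Measure α} {f g : α → ℝ} (hf : Integrable f μ) (hg : Integrable g μ)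
    (hle : f ≤ᵐ[μ] g) (hlt : μ {x | f x < g x} ≠ 0) : ∫ x, f x ∂μ < ∫ x, g x ∂μ := by
  have hsupp : {x | f x < g x} ⊆ Function.support (g - f) := fun x hx =>
    (sub_pos.2 hx).ne'
  have hpos : 0 < ∫ x, (g - f) x ∂μ :=
    (integral_pos_iff_support_of_nonneg_ae (by filter_upwards [hle] with x hx using sub_nonneg.2 hx)
      (hg.sub hf)).2 (pos_iff_ne_zero.2 fun h => hlt (measure_mono_null hsupp h))
  rwa [Pi.sub_def, integral_sub hg hf, sub_pos] at hpos

lemma integrableOn_linear_mul_exp_neg (a b : ℝ) :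
    IntegrableOn (fun x => (a * x + b) * exp (-x)) (Ioi 0) := by
  have h1 : IntegrableOn (fun x : ℝ => x * exp (-x)) (Ioi 0) := by
    simpa using integrableOn_rpow_mul_exp_neg_rpow (p := 1) (s := 1) (by norm_num) one_pos
  refine ((h1.const_mul a).add ((integrableOn_exp_neg_Ioi 0).const_mul b)).congr
    (ae_of_all _ fun x => ?_)
  simp only [Pi.add_apply]
  ring

lemma setIntegral_Ioi_const_mul_exp_neg (c : ℝ) : ∫ x in Ioi 0, c * exp (-x) = c := by
  rw [integral_const_mul, integral_exp_neg_Ioi_zero, mul_one]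

lemma neg_div_lt_zero {x t : ℝ} (hx : 0 < x) (ht : 0 < t) : -x / t < 0 :=
  div_neg_of_neg_of_pos (neg_neg_of_pos hx) ht

lemma tendsto_neg_div_nhdsGT_zero {x : ℝ} (hx : 0 < x) :
    Tendsto (fun t => -x / t) (𝓝[>] 0) atBot := by
  simpa only [Function.comp_def, neg_div, div_eq_mul_inv, neg_mul] using
    tendsto_neg_atTop_atBot.comp (tendsto_inv_nhdsGT_zero.const_mul_atTop hx)

lemma tendsto_neg_div_atTop {x : ℝ} (hx : 0 < x) :
    Tendsto (fun t => -x / t) atTop (𝓝[≤] 0) :=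
  tendsto_nhdsWithin_iff.2 ⟨tendsto_const_nhds.div_atTop tendsto_id,
    (eventually_gt_atTop 0).mono fun _ ht => (neg_div_lt_zero hx ht).le⟩

noncomputable def expAverage (φ : ℝ → ℝ) (t : ℝ) : ℝ := ∫ x in Ioi 0, φ (-x / t) * exp (-x)

section ExpAverage

variable {φ : ℝ → ℝ} {a b : ℝ}

lemma aestronglyMeasurable_expAverage_integrand (hφ : ContinuousOn φ (Iic 0)) {t : ℝ}
    (ht : 0 < t) :
    AEStronglyMeasurable (fun x => φ (-x / t) * exp (-x)) (volume.restrict (Ioi 0)) :=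
  ((hφ.comp (by fun_prop) fun _ hx => (neg_div_lt_zero hx ht).le).mul
    (by fun_prop)).aestronglyMeasurable measurableSet_Ioi

lemma norm_expAverage_integrand_le (ha : 0 ≤ a) (hbound : ∀ s ≤ 0, |φ s| ≤ a * |s| + b)
    {τ t x : ℝ} (hτ : 0 < τ) (hτt : τ ≤ t) (hx : 0 < x) :
    ‖φ (-x / t) * exp (-x)‖ ≤ (a / τ * x + b) * exp (-x) := by
  have ht := hτ.trans_le hτt
  rw [norm_mul, norm_of_nonneg (exp_pos _).le, Real.norm_eq_abs]
  gcongr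
  calc |φ (-x / t)| ≤ a * |-x / t| + b := hbound _ (neg_div_lt_zero hx ht).le
    _ = a / t * x + b := by rw [abs_div, abs_neg, abs_of_pos hx, abs_of_pos ht]; ring
    _ ≤ a / τ * x + b := by gcongr

lemma ae_norm_expAverage_integrand_le (ha : 0 ≤ a) (hbound : ∀ s ≤ 0, |φ s| ≤ a * |s| + b)
    {τ t : ℝ} (hτ : 0 < τ) (hτt : τ ≤ t) :
    ∀ᵐ x ∂volume.restrict (Ioi 0), ‖φ (-x / t) * exp (-x)‖ ≤ (a / τ * x + b) * exp (-x) :=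
  (ae_restrict_iff' measurableSet_Ioi).2 <| ae_of_all _ fun _ hx =>
    norm_expAverage_integrand_le ha hbound hτ hτt hx

lemma integrableOn_expAverage_integrand (hφ : ContinuousOn φ (Iic 0)) (ha : 0 ≤ a)
    (hbound : ∀ s ≤ 0, |φ s| ≤ a * |s| + b) {t : ℝ} (ht : 0 < t) :
    IntegrableOn (fun x => φ (-x / t) * exp (-x)) (Ioi 0) :=
  (integrableOn_linear_mul_exp_neg (a / t) b).mono'
    (aestronglyMeasurable_expAverage_integrand hφ ht)
    (ae_norm_expAverage_integrand_le ha hbound ht le_rfl)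

lemma continuousOn_expAverage (hφ : ContinuousOn φ (Iic 0)) (ha : 0 ≤ a)
    (hbound : ∀ s ≤ 0, |φ s| ≤ a * |s| + b) : ContinuousOn (expAverage φ) (Ioi 0) := by
  intro t (ht : 0 < t)
  have hnhds : Ioi (t / 2) ∈ 𝓝 t := Ioi_mem_nhds (half_lt_self ht)
  refine (continuousAt_of_dominated ?_ ?_ (integrableOn_linear_mul_exp_neg (a / (t / 2)) b)
    ?_).continuousWithinAt
  · filter_upwards [hnhds] with t' ht'
    exact aestronglyMeasurable_expAverage_integrand hφ ((half_pos ht).trans ht')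
  · filter_upwards [hnhds] with t' ht'
    exact ae_norm_expAverage_integrand_le ha hbound (half_pos ht) ht'.le
  · refine (ae_restrict_iff' measurableSet_Ioi).2 (ae_of_all _ fun x (hx : 0 < x) => ?_)
    have hφx : ContinuousAt φ (-x / t) := hφ.continuousAt (Iic_mem_nhds (neg_div_lt_zero hx ht))
    exact (hφx.comp (continuousAt_const.div continuousAt_id ht.ne')).mul continuousAt_const

lemma tendsto_expAverage_atTop (hφ : ContinuousOn φ (Iic 0)) (ha : 0 ≤ a)
    (hbound : ∀ s ≤ 0, |φ s| ≤ a * |s| + b) : Tendsto (expAverage φ) atTop (𝓝 (φ 0)) := by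
  rw [← setIntegral_Ioi_const_mul_exp_neg (φ 0)]
  refine tendsto_integral_filter_of_dominated_convergence _ ?_ ?_
    (integrableOn_linear_mul_exp_neg (a / 1) b) ?_
  · filter_upwards [eventually_gt_atTop 0] with t ht
    exact aestronglyMeasurable_expAverage_integrand hφ ht
  · filter_upwards [eventually_ge_atTop 1] with t ht
    exact ae_norm_expAverage_integrand_le ha hbound one_pos ht
  · refine (ae_restrict_iff' measurableSet_Ioi).2 (ae_of_all _ fun x (hx : 0 < x) => ?_)
    exact ((hφ 0 self_mem_Iic).tendsto.comp (tendsto_neg_div_atTop hx)).mul_const _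

lemma tendsto_expAverage_nhdsGT_zero (hφ : ContinuousOn φ (Iic 0))
    (hbdd : ∀ s ≤ 0, |φ s| ≤ b) {l : ℝ} (hl : Tendsto φ atBot (𝓝 l)) :
    Tendsto (expAverage φ) (𝓝[>] 0) (𝓝 l) := by
  have hbound : ∀ s ≤ 0, |φ s| ≤ 0 * |s| + b := fun s hs => by simpa using hbdd s hs
  rw [← setIntegral_Ioi_const_mul_exp_neg l]
  refine tendsto_integral_filter_of_dominated_convergence (fun x => b * exp (-x))
    ?_ ?_ ((integrableOn_exp_neg_Ioi 0).const_mul b) ?_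
  · filter_upwards [self_mem_nhdsWithin] with t ht
    exact aestronglyMeasurable_expAverage_integrand hφ ht
  · filter_upwards [self_mem_nhdsWithin] with t (ht : 0 < t)
    simpa using ae_norm_expAverage_integrand_le le_rfl hbound ht le_rfl
  · refine (ae_restrict_iff' measurableSet_Ioi).2 (ae_of_all _ fun x (hx : 0 < x) => ?_)
    exact (hl.comp (tendsto_neg_div_nhdsGT_zero hx)).mul_const _

lemma expAverage_le (hφ : ContinuousOn φ (Iic 0)) (ha : 0 ≤ a)
    (hbound : ∀ s ≤ 0, |φ s| ≤ a * |s| + b) (hmono : MonotoneOn φ (Iic 0))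
    (hnonpos : ∀ s ≤ 0, φ s ≤ 0) {t : ℝ} (ht : 0 < t) :
    expAverage φ t ≤ φ (-1 / t) * exp (-1) := by
  have hind : IntegrableOn ((Ioi 1).indicator fun x => φ (-1 / t) * exp (-x)) (Ioi 0) :=
    ((integrableOn_exp_neg_Ioi 0).const_mul (φ (-1 / t))).indicator measurableSet_Ioi
  calc expAverage φ t ≤ ∫ x in Ioi 0, (Ioi 1).indicator (fun x => φ (-1 / t) * exp (-x)) x := by
        refine setIntegral_mono_on (integrableOn_expAverage_integrand hφ ha hbound ht) hind
          measurableSet_Ioi fun x (hx : 0 < x) => ?_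
        by_cases h1 : x ∈ Ioi 1
        · rw [indicator_of_mem h1]
          gcongr
          exact hmono (neg_div_lt_zero hx ht).le (neg_div_lt_zero one_pos ht).le
            (div_le_div_of_nonneg_right (neg_le_neg (le_of_lt h1)) ht.le)
        · rw [indicator_of_notMem h1]
          exact mul_nonpos_of_nonpos_of_nonneg (hnonpos _ (neg_div_lt_zero hx ht).le) (exp_pos _).le
    _ = φ (-1 / t) * exp (-1) := by
        rw [integral_indicator measurableSet_Ioi, Measure.restrict_restrict measurableSet_Ioi,
          Ioi_inter_Ioi, sup_of_le_left zero_le_one, integral_const_mul, integral_exp_neg_Ioi]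

lemma tendsto_expAverage_nhdsGT_zero_atBot (hφ : ContinuousOn φ (Iic 0)) (ha : 0 ≤ a)
    (hbound : ∀ s ≤ 0, |φ s| ≤ a * |s| + b) (hmono : MonotoneOn φ (Iic 0))
    (hnonpos : ∀ s ≤ 0, φ s ≤ 0) (hl : Tendsto φ atBot atBot) :
    Tendsto (expAverage φ) (𝓝[>] 0) atBot :=
  tendsto_atBot_mono' _ (eventually_mem_nhdsWithin.mono fun _ ht =>
      expAverage_le hφ ha hbound hmono hnonpos ht)
    ((hl.comp (tendsto_neg_div_nhdsGT_zero one_pos)).atBot_mul_const (exp_pos _))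

lemma strictMonoOn_expAverage (hφ : ContinuousOn φ (Iic 0)) (ha : 0 ≤ a)
    (hbound : ∀ s ≤ 0, |φ s| ≤ a * |s| + b) (hmono : StrictMonoOn φ (Iic 0)) :
    StrictMonoOn (expAverage φ) (Ioi 0) := by
  intro t (ht : 0 < t) t' (ht' : 0 < t') htt'
  have hlt : ∀ x ∈ Ioi (0 : ℝ), φ (-x / t) * exp (-x) < φ (-x / t') * exp (-x) :=
    fun x (hx : 0 < x) => by
      refine mul_lt_mul_of_pos_right (hmono (neg_div_lt_zero hx ht).le
        (neg_div_lt_zero hx ht').le ?_) (exp_pos _)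
      rw [neg_div, neg_div, neg_lt_neg_iff]
      exact div_lt_div_of_pos_left hx ht htt'
  refine integral_lt_integral_of_ae_le_of_measure_setOf_lt_ne_zero
    (integrableOn_expAverage_integrand hφ ha hbound ht)
    (integrableOn_expAverage_integrand hφ ha hbound ht')
    ((ae_restrict_iff' measurableSet_Ioi).2 (ae_of_all _ fun x hx => (hlt x hx).le)) ?_
  have hsub : Ioi (0 : ℝ) ⊆ {x | φ (-x / t) * exp (-x) < φ (-x / t') * exp (-x)} ∩ Ioi 0 :=
    fun x hx => ⟨hlt x hx, hx⟩
  rw [Measure.restrict_apply' measurableSet_Ioi]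
  exact fun h => by simpa using measure_mono_null hsub h

end ExpAverage

section LaplaceTransform

variable {μ : Measure ℝ}

lemma ae_nonneg_of_measure_Iio_eq_zero (hμ : μ (Iio 0) = 0) : ∀ᵐ u ∂μ, 0 ≤ u :=
  ae_iff.2 (measure_mono_null (fun _ hu => not_le.1 hu) hμ)

lemma measure_Ioi_ne_zero_of_ne_dirac [IsProbabilityMeasure μ] (hμ : μ (Iio 0) = 0)
    (hd : μ ≠ Measure.dirac 0) : μ (Ioi 0) ≠ 0 := by
  contrapose! hd
  have hc : μ {0}ᶜ = 0 := by
    rw [← Iio_union_Ioi]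
    exact measure_union_null hμ hd
  have hae : ({0} : Set ℝ) ∈ ae μ := by
    simpa only [compl_compl] using compl_mem_ae_iff.2 hc
  rw [← Measure.restrict_eq_self_of_ae_mem (s := {0}) hae, Measure.restrict_singleton,
    (prob_compl_eq_zero_iff (measurableSet_singleton 0)).1 hc, one_smul]

lemma ae_norm_exp_mul_le_one (h0 : ∀ᵐ u ∂μ, 0 ≤ u) {s : ℝ} (hs : s ≤ 0) :
    ∀ᵐ u ∂μ, ‖exp (s * u)‖ ≤ 1 := by
  filter_upwards [h0] with u hu
  rw [norm_of_nonneg (exp_pos _).le]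
  exact exp_le_one_iff.2 (mul_nonpos_of_nonpos_of_nonneg hs hu)

lemma integrable_exp_mul_of_nonpos [IsFiniteMeasure μ] (h0 : ∀ᵐ u ∂μ, 0 ≤ u) {s : ℝ}
    (hs : s ≤ 0) : Integrable (fun u => exp (s * u)) μ :=
  (integrable_const 1).mono' (by fun_prop) (ae_norm_exp_mul_le_one h0 hs)

lemma mgf_le_one_of_nonpos [IsProbabilityMeasure μ] (h0 : ∀ᵐ u ∂μ, 0 ≤ u) {s : ℝ} (hs : s ≤ 0) :
    mgf id μ s ≤ 1 := by
  calc mgf id μ s ≤ ∫ _, (1 : ℝ) ∂μ :=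
        integral_mono_ae (integrable_exp_mul_of_nonpos h0 hs) (integrable_const 1) <| by
          filter_upwards [ae_norm_exp_mul_le_one h0 hs] with u hu using (le_norm_self _).trans hu
    _ = 1 := by simp

lemma mgf_strictMonoOn_Iic [IsFiniteMeasure μ] (h0 : ∀ᵐ u ∂μ, 0 ≤ u) (hpos : μ (Ioi 0) ≠ 0) :
    StrictMonoOn (mgf id μ) (Iic 0) := by
  intro s hs s' hs' hss'
  refine integral_lt_integral_of_ae_le_of_measure_setOf_lt_ne_zero
    (integrable_exp_mul_of_nonpos h0 hs) (integrable_exp_mul_of_nonpos h0 hs') ?_ ?_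
  · filter_upwards [h0] with u hu
    exact exp_le_exp.2 (mul_le_mul_of_nonneg_right hss'.le hu)
  · refine fun h => hpos (measure_mono_null (fun u (hu : 0 < u) => ?_) h)
    exact exp_lt_exp.2 (mul_lt_mul_of_pos_right hss' hu)

lemma mgf_monotoneOn_Iic [IsFiniteMeasure μ] (h0 : ∀ᵐ u ∂μ, 0 ≤ u) :
    MonotoneOn (mgf id μ) (Iic 0) := fun s _ s' hs' hss' =>
  integral_mono_ae (integrable_exp_mul_of_nonpos h0 (hss'.trans hs'))
    (integrable_exp_mul_of_nonpos h0 hs') <| by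
      filter_upwards [h0] with u hu
      exact exp_le_exp.2 (mul_le_mul_of_nonneg_right hss' hu)

lemma continuousOn_mgf_Iic [IsFiniteMeasure μ] (h0 : ∀ᵐ u ∂μ, 0 ≤ u) :
    ContinuousOn (mgf id μ) (Iic 0) :=
  continuousOn_of_dominated (bound := fun _ => 1) (fun _ _ => by fun_prop)
    (fun _ hs => ae_norm_exp_mul_le_one h0 hs) (integrable_const 1)
    (ae_of_all _ fun _ => by fun_prop)

lemma tendsto_mgf_atBot [IsFiniteMeasure μ] (h0 : ∀ᵐ u ∂μ, 0 ≤ u) :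
    Tendsto (mgf id μ) atBot (𝓝 (μ.real {0})) := by
  rw [← integral_indicator_one (measurableSet_singleton 0)]
  refine tendsto_integral_filter_of_dominated_convergence (fun _ => 1)
    (Eventually.of_forall fun _ => by fun_prop) ?_ (integrable_const 1) ?_
  · filter_upwards [Iic_mem_atBot 0] with s hs using ae_norm_exp_mul_le_one h0 hs
  · filter_upwards [h0] with u hu
    rcases hu.eq_or_lt with rfl | hu
    · simp
    · simpa [Function.comp_def, Pi.single_apply, hu.ne'] using
        tendsto_exp_atBot.comp (tendsto_id.atBot_mul_const hu)

lemma exp_mul_mul_measureReal_Iic_le_mgf [IsFiniteMeasure μ] (h0 : ∀ᵐ u ∂μ, 0 ≤ u) {s : ℝ}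
    (hs : s ≤ 0) (K : ℝ) : exp (s * K) * μ.real (Iic K) ≤ mgf id μ s := by
  have hint := integrable_exp_mul_of_nonpos h0 hs
  calc exp (s * K) * μ.real (Iic K) = ∫ _ in Iic K, exp (s * K) ∂μ := by
        rw [setIntegral_const, smul_eq_mul, mul_comm]
    _ ≤ ∫ u in Iic K, exp (s * u) ∂μ :=
        setIntegral_mono_on (integrableOn_const (measure_ne_top _ _)) hint.integrableOn
          measurableSet_Iic fun u hu => exp_le_exp.2 (mul_le_mul_of_nonpos_left hu hs)
    _ ≤ mgf id μ s := setIntegral_le_integral hint (ae_of_all _ fun _ => (exp_pos _).le)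

lemma measure_Iic_zero_eq_measure_singleton (hμ : μ (Iio 0) = 0) : μ (Iic 0) = μ {0} := by
  rw [← Iio_union_right, measure_union (by simp) (measurableSet_singleton 0), hμ, zero_add]

end LaplaceTransform

section CumulantTransform

variable {μ : Measure ℝ} [IsProbabilityMeasure μ]

lemma cgf_nonpos_of_nonpos (h0 : ∀ᵐ u ∂μ, 0 ≤ u) {s : ℝ} (hs : s ≤ 0) : cgf id μ s ≤ 0 :=
  log_nonpos mgf_nonneg (mgf_le_one_of_nonpos h0 hs)

lemma mgf_pos_of_nonpos (h0 : ∀ᵐ u ∂μ, 0 ≤ u) {s : ℝ} (hs : s ≤ 0) : 0 < mgf id μ s :=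
  mgf_pos (integrable_exp_mul_of_nonpos h0 hs)

lemma continuousOn_cgf_Iic (h0 : ∀ᵐ u ∂μ, 0 ≤ u) : ContinuousOn (cgf id μ) (Iic 0) :=
  (continuousOn_mgf_Iic h0).log fun _ hs => (mgf_pos_of_nonpos h0 hs).ne'

lemma cgf_monotoneOn_Iic (h0 : ∀ᵐ u ∂μ, 0 ≤ u) : MonotoneOn (cgf id μ) (Iic 0) :=
  fun _ hs _ hs' hss' => log_le_log (mgf_pos_of_nonpos h0 hs) (mgf_monotoneOn_Iic h0 hs hs' hss')

lemma cgf_strictMonoOn_Iic (h0 : ∀ᵐ u ∂μ, 0 ≤ u) (hpos : μ (Ioi 0) ≠ 0) :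
    StrictMonoOn (cgf id μ) (Iic 0) :=
  fun _ hs _ hs' hss' =>
    log_lt_log (mgf_pos_of_nonpos h0 hs) (mgf_strictMonoOn_Iic h0 hpos hs hs' hss')

lemma abs_cgf_le (h0 : ∀ᵐ u ∂μ, 0 ≤ u) {s : ℝ} (hs : s ≤ 0) {K : ℝ} (hK : 0 < μ.real (Iic K)) :
    |cgf id μ s| ≤ K * |s| - log (μ.real (Iic K)) := by
  have hlower : s * K + log (μ.real (Iic K)) ≤ cgf id μ s := by
    rw [← log_exp (s * K), ← log_mul (exp_pos _).ne' hK.ne']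
    exact log_le_log (by positivity) (exp_mul_mul_measureReal_Iic_le_mgf h0 hs K)
  rw [abs_of_nonpos (cgf_nonpos_of_nonpos h0 hs), abs_of_nonpos hs]
  linarith

lemma exists_abs_cgf_le (h0 : ∀ᵐ u ∂μ, 0 ≤ u) :
    ∃ a b : ℝ, 0 ≤ a ∧ ∀ s ≤ 0, |cgf id μ s| ≤ a * |s| + b := by
  have hlim : Tendsto (fun K => μ (Iic K)) atTop (𝓝 1) := by
    simpa using tendsto_measure_Iic_atTop μ
  obtain ⟨K, hK, hK0⟩ :=
    ((hlim.eventually (lt_mem_nhds one_pos)).and (eventually_ge_atTop 0)).exists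
  have hKpos : 0 < μ.real (Iic K) := ENNReal.toReal_pos hK.ne' (measure_ne_top _ _)
  exact ⟨K, -log (μ.real (Iic K)), hK0, fun s hs => (abs_cgf_le h0 hs hKpos).trans_eq (by ring)⟩

lemma abs_cgf_le_neg_log_measureReal_singleton (hμ : μ (Iio 0) = 0) (h : μ {0} ≠ 0) {s : ℝ}
    (hs : s ≤ 0) : |cgf id μ s| ≤ -log (μ.real {0}) := by
  have hIic : μ.real (Iic 0) = μ.real {0} := by
    rw [measureReal_def, measureReal_def, measure_Iic_zero_eq_measure_singleton hμ]
  have h0 := ae_nonneg_of_measure_Iio_eq_zero hμ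
  have hpos : 0 < μ.real (Iic 0) := hIic ▸ ENNReal.toReal_pos h (measure_ne_top _ _)
  simpa [hIic] using abs_cgf_le h0 hs hpos

lemma tendsto_cgf_atBot (h0 : ∀ᵐ u ∂μ, 0 ≤ u) (h : μ {0} ≠ 0) :
    Tendsto (cgf id μ) atBot (𝓝 (log (μ.real {0}))) :=
  ((continuousAt_log (ENNReal.toReal_pos h (measure_ne_top _ _)).ne').tendsto).comp
    (tendsto_mgf_atBot h0)

lemma tendsto_cgf_atBot_atBot (h0 : ∀ᵐ u ∂μ, 0 ≤ u) (h : μ {0} = 0) :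
    Tendsto (cgf id μ) atBot atBot := by
  have hmgf : Tendsto (mgf id μ) atBot (𝓝[>] 0) := by
    refine tendsto_nhdsWithin_iff.2 ⟨?_, ?_⟩
    · simpa [measureReal_def, h] using tendsto_mgf_atBot h0
    · filter_upwards [Iic_mem_atBot 0] with s hs using mgf_pos_of_nonpos h0 hs
  exact tendsto_log_nhdsGT_zero.comp hmgf

end CumulantTransform


/-- The map `t ↦ ∫₀^∞ C_μ(-x/t) e^{-x} dx` is strictly increasing (when `μ ≠ δ₀`) and
continuous on `(0,∞)`, tends to `log μ({0})` as `t → 0⁺` (interpreted as `-∞` when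
`μ({0}) = 0`), and tends to `0` as `t → ∞`. -/
theorem omega_integral_properties (μ : Measure ℝ) [IsProbabilityMeasure μ]
    (hμ : μ (Set.Iio 0) = 0) :
    (μ ≠ Measure.dirac 0 →
      StrictMonoOn
        (fun t : ℝ => ∫ x in Set.Ioi (0:ℝ),
          Real.log (∫ u, Real.exp ((-x / t) * u) ∂μ) * Real.exp (-x))
        (Set.Ioi 0)) ∧
    ContinuousOn
      (fun t : ℝ => ∫ x in Set.Ioi (0:ℝ),
        Real.log (∫ u, Real.exp ((-x / t) * u) ∂μ) * Real.exp (-x))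
      (Set.Ioi 0) ∧
    (μ {0} = 0 →
      Tendsto
        (fun t : ℝ => ∫ x in Set.Ioi (0:ℝ),
          Real.log (∫ u, Real.exp ((-x / t) * u) ∂μ) * Real.exp (-x))
        (nhdsWithin 0 (Set.Ioi 0)) atBot) ∧
    (μ {0} ≠ 0 →
      Tendsto
        (fun t : ℝ => ∫ x in Set.Ioi (0:ℝ),
          Real.log (∫ u, Real.exp ((-x / t) * u) ∂μ) * Real.exp (-x))
        (nhdsWithin 0 (Set.Ioi 0)) (nhds (Real.log ((μ {0}).toReal)))) ∧
    Tendsto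
      (fun t : ℝ => ∫ x in Set.Ioi (0:ℝ),
        Real.log (∫ u, Real.exp ((-x / t) * u) ∂μ) * Real.exp (-x))
      atTop (nhds 0) := by
  have h0 := ae_nonneg_of_measure_Iio_eq_zero hμ
  have hC := continuousOn_cgf_Iic h0
  obtain ⟨a, b, ha, hbound⟩ := exists_abs_cgf_le h0
  have hΩ : (fun t : ℝ => ∫ x in Ioi (0:ℝ), log (∫ u, exp ((-x / t) * u) ∂μ) * exp (-x)) =
      expAverage (cgf id μ) := rfl
  rw [hΩ]
  refine ⟨fun hd => ?_, continuousOn_expAverage hC ha hbound, fun h => ?_, fun h => ?_, ?_⟩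
  · exact strictMonoOn_expAverage hC ha hbound
      (cgf_strictMonoOn_Iic h0 (measure_Ioi_ne_zero_of_ne_dirac hμ hd))
  · exact tendsto_expAverage_nhdsGT_zero_atBot hC ha hbound (cgf_monotoneOn_Iic h0)
      (fun _ hs => cgf_nonpos_of_nonpos h0 hs) (tendsto_cgf_atBot_atBot h0 h)
  · exact tendsto_expAverage_nhdsGT_zero hC
      (fun _ hs => abs_cgf_le_neg_log_measureReal_singleton hμ h hs) (tendsto_cgf_atBot h0 h)
  · simpa only [cgf_zero] using tendsto_expAverage_atTop hC ha hbound
end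

section
/- Let c_α (0 < α < 1) be the positive stable law with cumulant transform C_{c_α}(s) = -(-s)^α for s ≤ 0, and let Ω̃(μ) = e⁻¹ ⊛ μ. Then Ω̃(c_α)([0,t]) = exp(-t^{-α}) for t > 0, i.e., Ω̃(c_α) is the Fréchet distribution with parameter α. -/
open MeasureTheory Set Filter Real

/-- The exponential distribution with density `e^{-x}` on `(0,∞)`. -/
noncomputable def expDist : Measure ℝ :=
  (volume.restrict (Set.Ioi 0)).withDensity fun x => ENNReal.ofReal (Real.exp (-x))

/-- Multiplicative convolution: the law of a product of independent random variables. -/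
noncomputable def multConv (μ ν : Measure ℝ) : Measure ℝ :=
  Measure.map (fun p : ℝ × ℝ => p.1 * p.2) (μ.prod ν)

lemma lintegral_exp_neg_Ioi (a : ℝ) :
    ∫⁻ x in Set.Ioi a, ENNReal.ofReal (Real.exp (-x)) = ENNReal.ofReal (Real.exp (-a)) := by
  have hint : IntegrableOn (fun x : ℝ => Real.exp (-x)) (Set.Ioi a) := by
    simpa using exp_neg_integrableOn_Ioi a one_pos
  rw [← ofReal_integral_eq_lintegral_ofReal hint
    (Filter.Eventually.of_forall fun x => (Real.exp_pos _).le), integral_exp_neg_Ioi]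

lemma expDist_apply {s : Set ℝ} (hs : MeasurableSet s) :
    expDist s = ∫⁻ x in s ∩ Set.Ioi 0, ENNReal.ofReal (Real.exp (-x)) := by
  rw [expDist, withDensity_apply _ hs, Measure.restrict_restrict hs]

instance : IsProbabilityMeasure expDist := by
  constructor
  rw [expDist_apply MeasurableSet.univ, Set.univ_inter, lintegral_exp_neg_Ioi]
  simp

lemma expDist_key {u t : ℝ} (hu : 0 ≤ u) (ht : 0 < t) :
    expDist {e : ℝ | e⁻¹ * u ≤ t} = ENNReal.ofReal (Real.exp (-(u / t))) := by
  have hmeas : MeasurableSet {e : ℝ | e⁻¹ * u ≤ t} :=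
    measurableSet_le (measurable_inv.mul_const u) measurable_const
  rw [expDist_apply hmeas]
  have hset : ({e : ℝ | e⁻¹ * u ≤ t} ∩ Set.Ioi 0 : Set ℝ) =ᵐ[volume] Set.Ioi (u / t) := by
    have h1 : ({e : ℝ | e⁻¹ * u ≤ t} ∩ Set.Ioi 0) \ Set.Ioi (u / t) ⊆ {u / t} := by
      intro e ⟨⟨he1, he2⟩, he3⟩
      simp only [Set.mem_setOf_eq, Set.mem_Ioi, not_lt] at *
      have h4 : u / e ≤ t := by rwa [← inv_mul_eq_div]
      have h5 : u ≤ t * e := by nlinarith [(div_le_iff₀ he2).1 h4]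
      have h6 : u / t ≤ e := (div_le_iff₀ ht).2 (by linarith [mul_comm t e])
      simp [le_antisymm he3 h6]
    have h2 : Set.Ioi (u / t) \ ({e : ℝ | e⁻¹ * u ≤ t} ∩ Set.Ioi 0) = ∅ := by
      ext e
      simp only [Set.mem_diff, Set.mem_Ioi, Set.mem_inter_iff, Set.mem_setOf_eq,
        Set.mem_empty_iff_false, iff_false, not_and, not_lt]
      rintro he h
      have he0 : 0 < e := lt_of_le_of_lt (div_nonneg hu ht.le) he
      have h3 : u < e * t := (div_lt_iff₀ ht).1 he
      have h4 : u / e ≤ t := (div_le_iff₀ he0).2 (by nlinarith)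
      have h5 : e⁻¹ * u ≤ t := by rwa [inv_mul_eq_div]
      exact absurd (h h5) (not_le.2 he0)
    refine MeasureTheory.ae_eq_set.2 ⟨measure_mono_null h1 (measure_singleton _), by simp [h2]⟩
  rw [Measure.restrict_congr_set hset, lintegral_exp_neg_Ioi]

/-- If `c_α` is the positive stable law with Laplace transform
`∫ e^{s u} dc_α(u) = exp(-(-s)^α)` for `s ≤ 0`, then `Ω̃(c_α) = e⁻¹ ⊛ c_α` is the
Fréchet distribution: `Ω̃(c_α)([0,t]) = exp(-t^{-α})` for `t > 0`. -/
theorem omegaTilde_stable_frechet (α : ℝ) (hα : 0 < α) (hα1 : α < 1)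
    (c : Measure ℝ) [IsProbabilityMeasure c] (hc : c (Set.Iio 0) = 0)
    (hLaplace : ∀ s : ℝ, s ≤ 0 →
      (∫ u, Real.exp (s * u) ∂c) = Real.exp (-(-s) ^ α)) :
    ∀ t : ℝ, 0 < t →
      ((multConv (Measure.map (fun x : ℝ => x⁻¹) expDist) c) (Set.Iic t)).toReal =
        Real.exp (-t ^ (-α)) := by
  intro t ht
  set μ : Measure ℝ := Measure.map (fun x : ℝ => x⁻¹) expDist with hμ
  have : IsProbabilityMeasure μ := Measure.isProbabilityMeasure_map measurable_inv.aemeasurable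
  have hmul : Measurable (fun p : ℝ × ℝ => p.1 * p.2) := measurable_fst.mul measurable_snd
  have hau : ∀ᵐ u ∂c, 0 ≤ u := by
    rw [MeasureTheory.ae_iff]
    simpa [Set.Iio] using hc
  have hstep : (multConv μ c) (Set.Iic t) = ENNReal.ofReal (Real.exp (-t ^ (-α))) := by
    rw [multConv, Measure.map_apply hmul measurableSet_Iic,
      Measure.prod_apply_symm (hmul measurableSet_Iic)]
    have hae : (fun u => μ ((fun x => (x, u)) ⁻¹' ((fun p : ℝ × ℝ => p.1 * p.2) ⁻¹' Set.Iic t)))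
        =ᵐ[c] fun u => ENNReal.ofReal (Real.exp (-t⁻¹ * u)) := by
      filter_upwards [hau] with u hu
      have h1 : ((fun x => (x, u)) ⁻¹' ((fun p : ℝ × ℝ => p.1 * p.2) ⁻¹' Set.Iic t))
          = {x : ℝ | x * u ≤ t} := by ext x; simp
      have hm : MeasurableSet {x : ℝ | x * u ≤ t} :=
        measurableSet_le (measurable_id.mul_const u) measurable_const
      rw [h1, hμ, Measure.map_apply measurable_inv hm]
      have h2 : ((fun x : ℝ => x⁻¹) ⁻¹' {x : ℝ | x * u ≤ t}) = {e : ℝ | e⁻¹ * u ≤ t} := rfl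
      rw [h2, expDist_key hu ht]
      congr 1
      ring_nf
    rw [lintegral_congr_ae hae]
    have hint : Integrable (fun u : ℝ => Real.exp (-t⁻¹ * u)) c := by
      refine Integrable.mono' (integrable_const 1)
        ((Real.measurable_exp.comp (measurable_const.mul measurable_id)).aestronglyMeasurable) ?_
      filter_upwards [hau] with u hu
      rw [Real.norm_eq_abs, abs_of_pos (Real.exp_pos _)]
      exact Real.exp_le_one_iff.2 (by nlinarith [inv_pos.2 ht])
    rw [← ofReal_integral_eq_lintegral_ofReal hint
      (Filter.Eventually.of_forall fun u => (Real.exp_pos _).le),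
      hLaplace (-t⁻¹) (by simp [le_of_lt (inv_pos.2 ht)]), neg_neg]
    congr 2
    rw [Real.inv_rpow ht.le, ← Real.rpow_neg ht.le]
  rw [hstep, ENNReal.toReal_ofReal (Real.exp_pos _).le]
end

section
/- The map Λ^∨ defined by Λ^∨(μ)([0,t]) = max{1 + log μ([0,t]), 0} (with value 0 when μ([0,t]) = 0) sends probability distribution functions on [0,∞) to probability distribution functions, and satisfies Λ^∨(μ∨ν) = Λ^∨(μ) ⊞∨ Λ^∨(ν), where (κ ⊞∨ ρ)([0,t]) = max{κ([0,t]) + ρ([0,t]) - 1, 0} is the free max-convolution. -/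
/-!
On `[0, ∞)` the map `x ↦ max (1 + log x) 0` agrees with `x ↦ 1 + log (max x e⁻¹)`, which is
continuous, monotone and fixes `0` and `1`; composed with a distribution function it therefore
gives a distribution function again. Since `log` turns products into sums, and all values of
distribution functions are at most `1`, truncating at `0` before or after adding is the same,
which gives the homomorphism property.
-/

open MeasureTheory Set Filter Real

/-- The map on distribution-function values associated with `Λ^∨`:
`x ↦ max{1 + log x, 0}`, with the convention that the value is `0` when `x = 0`. -/
noncomputable def lambdaMaxDF (x : ℝ) : ℝ :=
  if x = 0 then 0 else max (1 + Real.log x) 0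

open Topology ProbabilityTheory

def StieltjesFunction.comp (F : StieltjesFunction ℝ) {φ : ℝ → ℝ} (hφ : Monotone φ)
    (hφc : Continuous φ) : StieltjesFunction ℝ where
  toFun := φ ∘ F
  mono' := hφ.comp F.mono
  right_continuous' x := hφc.continuousAt.comp_continuousWithinAt (F.right_continuous x)

lemma exists_isProbabilityMeasure_cdf_eq_comp (μ : Measure ℝ) {φ : ℝ → ℝ}
    (hφ : Monotone φ) (hφc : Continuous φ) (hφ0 : φ 0 = 0) (hφ1 : φ 1 = 1) :
    ∃ κ : Measure ℝ, IsProbabilityMeasure κ ∧ ∀ t, cdf κ t = φ (cdf μ t) := by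
  set F := (cdf μ).comp hφ hφc
  have hbot : Tendsto F atBot (𝓝 0) := hφ0 ▸ (hφc.tendsto 0).comp (tendsto_cdf_atBot μ)
  have htop : Tendsto F atTop (𝓝 1) := hφ1 ▸ (hφc.tendsto 1).comp (tendsto_cdf_atTop μ)
  exact ⟨F.measure, F.isProbabilityMeasure hbot htop,
    fun t ↦ congrFun (congrArg _ (cdf_measure_stieltjesFunction F hbot htop)) t⟩

lemma measure_Iio_eq_zero_of_forall_lt {μ : Measure ℝ} {a : ℝ}
    (h : ∀ t < a, μ (Iic t) = 0) : μ (Iio a) = 0 := by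
  have hlt (n : ℕ) : a - 1 / (n + 1) < a := sub_lt_self a Nat.one_div_pos_of_nat
  have hlim : Tendsto (fun n : ℕ ↦ a - 1 / (n + 1)) atTop (𝓝 a) := by
    simpa using tendsto_one_div_add_atTop_nhds_zero_nat.const_sub a
  rw [← iUnion_Iic_eq_Iio_of_lt_of_tendsto hlt hlim]
  exact measure_iUnion_null fun n ↦ h _ (hlt n)

lemma cdf_eq_zero_of_measure_Iio {μ : Measure ℝ} [IsProbabilityMeasure μ] {a t : ℝ}
    (h : μ (Iio a) = 0) (ht : t < a) : cdf μ t = 0 := by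
  rw [cdf_eq_real, measureReal_def, measure_mono_null (Iic_subset_Iio.2 ht) h,
    ENNReal.toReal_zero]

noncomputable def lambdaMaxCont (x : ℝ) : ℝ := 1 + log (max x (exp (-1)))

lemma lambdaMaxDF_eq_lambdaMaxCont {x : ℝ} (hx : 0 ≤ x) : lambdaMaxDF x = lambdaMaxCont x := by
  rcases le_or_gt x (exp (-1)) with h | h
  · rw [lambdaMaxCont, max_eq_right h, log_exp, add_neg_cancel, lambdaMaxDF]
    split_ifs with h0
    · rfl
    · exact max_eq_right (by linarith [(log_le_iff_le_exp (hx.lt_of_ne' h0)).2 h])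
  · have hx0 : 0 < x := (exp_pos _).trans h
    rw [lambdaMaxCont, max_eq_left h.le, lambdaMaxDF, if_neg hx0.ne', max_eq_left]
    linarith [(lt_log_iff_exp_lt hx0).2 h]

lemma monotone_lambdaMaxCont : Monotone lambdaMaxCont := fun x y hxy ↦ by
  unfold lambdaMaxCont
  gcongr

lemma continuous_lambdaMaxCont : Continuous lambdaMaxCont :=
  continuous_const.add <| (continuous_id.max continuous_const).log
    fun _ ↦ (lt_max_of_lt_right (exp_pos _)).ne'

lemma lambdaMaxCont_zero : lambdaMaxCont 0 = 0 := by
  simp [lambdaMaxCont, (exp_pos _).le]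

lemma lambdaMaxCont_one : lambdaMaxCont 1 = 1 := by
  simp [lambdaMaxCont, exp_le_one_iff]

@[simp]
lemma lambdaMaxDF_zero : lambdaMaxDF 0 = 0 := if_pos rfl

lemma lambdaMaxDF_le_one {x : ℝ} (hx0 : 0 ≤ x) (hx1 : x ≤ 1) : lambdaMaxDF x ≤ 1 := by
  unfold lambdaMaxDF
  split_ifs
  · exact zero_le_one
  · exact max_le (by linarith [log_nonpos hx0 hx1]) zero_le_one

lemma lambdaMaxDF_mul {a b : ℝ} (ha0 : 0 ≤ a) (ha1 : a ≤ 1) (hb0 : 0 ≤ b) (hb1 : b ≤ 1) :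
    lambdaMaxDF (a * b) = max (lambdaMaxDF a + lambdaMaxDF b - 1) 0 := by
  rcases ha0.eq_or_lt with rfl | ha
  · simp [lambdaMaxDF_le_one hb0 hb1]
  rcases hb0.eq_or_lt with rfl | hb
  · simp [lambdaMaxDF_le_one ha0 ha1]
  have hla := log_nonpos ha0 ha1
  have hlb := log_nonpos hb0 hb1
  simp only [lambdaMaxDF, ha.ne', hb.ne', (mul_pos ha hb).ne', if_false, log_mul ha.ne' hb.ne']
  grind

theorem lambdaMax_hom_general (μ ν ρ : Measure ℝ)
    [IsProbabilityMeasure μ] [IsProbabilityMeasure ν]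
    (hμ : μ (Set.Iio 0) = 0)
    (hconv : ∀ t : ℝ, 0 ≤ t →
      (ρ (Set.Iic t)).toReal = (μ (Set.Iic t)).toReal * (ν (Set.Iic t)).toReal) :
    (∃ κ : Measure ℝ, IsProbabilityMeasure κ ∧ κ (Set.Iio 0) = 0 ∧
      ∀ t : ℝ, 0 ≤ t → (κ (Set.Iic t)).toReal = lambdaMaxDF ((μ (Set.Iic t)).toReal)) ∧
    (∀ t : ℝ, 0 ≤ t →
      lambdaMaxDF ((ρ (Set.Iic t)).toReal) =
        max (lambdaMaxDF ((μ (Set.Iic t)).toReal) +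
             lambdaMaxDF ((ν (Set.Iic t)).toReal) - 1) 0) := by
  obtain ⟨κ, hκ, hcdf⟩ := exists_isProbabilityMeasure_cdf_eq_comp μ monotone_lambdaMaxCont
    continuous_lambdaMaxCont lambdaMaxCont_zero lambdaMaxCont_one
  refine ⟨⟨κ, hκ, measure_Iio_eq_zero_of_forall_lt fun t ht ↦ ?_, fun t _ ↦ ?_⟩, fun t ht ↦ ?_⟩
  · rw [← ofReal_cdf, hcdf, cdf_eq_zero_of_measure_Iio hμ ht, lambdaMaxCont_zero,
      ENNReal.ofReal_zero]
  · rw [← measureReal_def, ← cdf_eq_real, hcdf, cdf_eq_real, measureReal_def,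
      lambdaMaxDF_eq_lambdaMaxCont ENNReal.toReal_nonneg]
  · rw [hconv t ht]
    exact lambdaMaxDF_mul measureReal_nonneg measureReal_le_one measureReal_nonneg
      measureReal_le_one

/-- `Λ^∨` sends probability distribution functions on `[0,∞)` to probability
distribution functions, and is a homomorphism from classical max-convolution to
free max-convolution. -/
theorem lambdaMax_hom (μ ν ρ : Measure ℝ)
    [IsProbabilityMeasure μ] [IsProbabilityMeasure ν] [IsProbabilityMeasure ρ]
    (hμ : μ (Set.Iio 0) = 0) (hν : ν (Set.Iio 0) = 0) (hρ : ρ (Set.Iio 0) = 0)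
    (hconv : ∀ t : ℝ, 0 ≤ t →
      (ρ (Set.Iic t)).toReal = (μ (Set.Iic t)).toReal * (ν (Set.Iic t)).toReal) :
    (∃ κ : Measure ℝ, IsProbabilityMeasure κ ∧ κ (Set.Iio 0) = 0 ∧
      ∀ t : ℝ, 0 ≤ t → (κ (Set.Iic t)).toReal = lambdaMaxDF ((μ (Set.Iic t)).toReal)) ∧
    (∀ t : ℝ, 0 ≤ t →
      lambdaMaxDF ((ρ (Set.Iic t)).toReal) =
        max (lambdaMaxDF ((μ (Set.Iic t)).toReal) +
             lambdaMaxDF ((ν (Set.Iic t)).toReal) - 1) 0) :=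
  lambdaMax_hom_general μ ν ρ hμ hconv
end

section
/- The map X^∨ defined by X^∨(μ)([0,t]) = exp(1 − 1/μ([0,t])) (value 0 when μ([0,t]) = 0) satisfies X^∨(μ ∪∨ ν) = X^∨(μ) ∨ X^∨(ν), where ∪∨ is boolean max-convolution: 1/(μ∪∨ν)([0,t]) = 1/μ([0,t]) + 1/ν([0,t]) − 1. -/
open MeasureTheory Set Filter Real

/-- The map on distribution-function values associated with `X^∨`:
`x ↦ exp(1 - 1/x)`, with the convention value `0` when `x = 0`. -/
noncomputable def chiMaxDF (x : ℝ) : ℝ :=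
  if x = 0 then 0 else Real.exp (1 - 1 / x)

/-- Boolean max-convolution on distribution-function values:
`(x, y) ↦ (1/x + 1/y - 1)⁻¹`, with value `0` when `x = 0` or `y = 0`. -/
noncomputable def boolMaxOp (x y : ℝ) : ℝ :=
  if x = 0 ∨ y = 0 then 0 else (1 / x + 1 / y - 1)⁻¹

lemma chiMaxDF_boolMaxOp {x y : ℝ} (hx0 : 0 ≤ x) (hx1 : x ≤ 1)
    (hy0 : 0 ≤ y) (hy1 : y ≤ 1) :
    chiMaxDF (boolMaxOp x y) = chiMaxDF x * chiMaxDF y := by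
  rcases eq_or_lt_of_le hx0 with hx | hx
  · simp [chiMaxDF, boolMaxOp, ← hx]
  rcases eq_or_lt_of_le hy0 with hy | hy
  · simp [chiMaxDF, boolMaxOp, ← hy]
  have hs : 0 < 1 / x + 1 / y - 1 := by
    have h1 : 1 ≤ 1 / x := (le_div_iff₀ hx).2 (by linarith)
    have h2 : 1 ≤ 1 / y := (le_div_iff₀ hy).2 (by linarith)
    linarith
  have hb : boolMaxOp x y = (1 / x + 1 / y - 1)⁻¹ := by
    simp [boolMaxOp, hx.ne', hy.ne']
  rw [hb]
  have hne : (1 / x + 1 / y - 1)⁻¹ ≠ 0 := by positivity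
  simp only [chiMaxDF, if_neg hne, if_neg hx.ne', if_neg hy.ne', ← Real.exp_add]
  rw [one_div, inv_inv]
  congr 1
  ring

/-- `X^∨` is a homomorphism from boolean max-convolution to classical
max-convolution: `X^∨(μ ∪∨ ν) = X^∨(μ) ∨ X^∨(ν)`. -/
theorem chiMax_hom (μ ν ρ : Measure ℝ)
    [IsProbabilityMeasure μ] [IsProbabilityMeasure ν] [IsProbabilityMeasure ρ]
    (hμ : μ (Set.Iio 0) = 0) (hν : ν (Set.Iio 0) = 0) (hρ : ρ (Set.Iio 0) = 0)
    (hconv : ∀ t : ℝ, 0 ≤ t →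
      (ρ (Set.Iic t)).toReal = boolMaxOp ((μ (Set.Iic t)).toReal) ((ν (Set.Iic t)).toReal)) :
    ∀ t : ℝ, 0 ≤ t →
      chiMaxDF ((ρ (Set.Iic t)).toReal) =
        chiMaxDF ((μ (Set.Iic t)).toReal) * chiMaxDF ((ν (Set.Iic t)).toReal) := by
  intro t ht
  rw [hconv t ht]
  have hx0 : 0 ≤ (μ (Set.Iic t)).toReal := ENNReal.toReal_nonneg
  have hy0 : 0 ≤ (ν (Set.Iic t)).toReal := ENNReal.toReal_nonneg
  have hx1 : (μ (Set.Iic t)).toReal ≤ 1 := by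
    have := prob_le_one (μ := μ) (s := Set.Iic t)
    simpa using ENNReal.toReal_mono ENNReal.one_ne_top this
  have hy1 : (ν (Set.Iic t)).toReal ≤ 1 := by
    have := prob_le_one (μ := ν) (s := Set.Iic t)
    simpa using ENNReal.toReal_mono ENNReal.one_ne_top this
  exact chiMaxDF_boolMaxOp hx0 hx1 hy0 hy1
end

section
/- The boolean max-convolution, defined on distribution functions F, G : [0,∞) → [0,1] by (F ⊎∨ G)(t) = (1/F(t) + 1/G(t) − 1)^{-1} when F(t), G(t) > 0 and 0 otherwise, yields a valid distribution function of a probability measure on [0,∞), and this operation is commutative and associative. -/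
open MeasureTheory Set Filter Real
open scoped Topology

lemma boolMaxOp_comm (x y : ℝ) : boolMaxOp x y = boolMaxOp y x := by
  simp only [boolMaxOp, or_comm, add_comm (1 / x)]

@[simp] lemma boolMaxOp_zero_left (y : ℝ) : boolMaxOp 0 y = 0 := by simp [boolMaxOp]

@[simp] lemma boolMaxOp_zero_right (x : ℝ) : boolMaxOp x 0 = 0 := by simp [boolMaxOp]

lemma boolMaxOp_of_ne_zero {x y : ℝ} (hx : x ≠ 0) (hy : y ≠ 0) :
    boolMaxOp x y = (x⁻¹ + y⁻¹ - 1)⁻¹ := by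
  simp [boolMaxOp, hx, hy]

lemma inv_boolMaxOp {x y : ℝ} (hx : x ≠ 0) (hy : y ≠ 0) :
    (boolMaxOp x y)⁻¹ = x⁻¹ + y⁻¹ - 1 := by
  rw [boolMaxOp_of_ne_zero hx hy, inv_inv]

lemma inv_le_inv_add_inv_sub_one {x y : ℝ} (hy : 0 < y) (hy1 : y ≤ 1) :
    x⁻¹ ≤ x⁻¹ + y⁻¹ - 1 := by
  linarith [one_le_inv₀ hy |>.2 hy1]

lemma inv_add_inv_sub_one_pos {x y : ℝ} (hx : 0 < x) (hy : 0 < y) (hy1 : y ≤ 1) :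
    0 < x⁻¹ + y⁻¹ - 1 :=
  (inv_pos.2 hx).trans_le (inv_le_inv_add_inv_sub_one hy hy1)

lemma boolMaxOp_pos {x y : ℝ} (hx : 0 < x) (hy : 0 < y) (hy1 : y ≤ 1) :
    0 < boolMaxOp x y := by
  rw [boolMaxOp_of_ne_zero hx.ne' hy.ne']
  exact inv_pos.2 (inv_add_inv_sub_one_pos hx hy hy1)

lemma boolMaxOp_nonneg {x y : ℝ} (hx : 0 ≤ x) (hy : 0 ≤ y) (hy1 : y ≤ 1) :
    0 ≤ boolMaxOp x y := by
  rcases hx.eq_or_lt with rfl | hx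
  · simp
  rcases hy.eq_or_lt with rfl | hy
  · simp
  exact (boolMaxOp_pos hx hy hy1).le

lemma boolMaxOp_le_left {x y : ℝ} (hx : 0 ≤ x) (hy : 0 ≤ y) (hy1 : y ≤ 1) :
    boolMaxOp x y ≤ x := by
  rcases hx.eq_or_lt with rfl | hx
  · simp
  rcases hy.eq_or_lt with rfl | hy
  · simpa using hx.le
  calc boolMaxOp x y = (x⁻¹ + y⁻¹ - 1)⁻¹ := boolMaxOp_of_ne_zero hx.ne' hy.ne'
    _ ≤ x⁻¹⁻¹ := inv_anti₀ (inv_pos.2 hx) (inv_le_inv_add_inv_sub_one hy hy1)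
    _ = x := inv_inv x

lemma boolMaxOp_le_right {x y : ℝ} (hx : 0 ≤ x) (hx1 : x ≤ 1) (hy : 0 ≤ y) :
    boolMaxOp x y ≤ y :=
  boolMaxOp_comm x y ▸ boolMaxOp_le_left hy hx hx1

lemma boolMaxOp_mono {x x' y y' : ℝ} (hx : 0 ≤ x) (hy : 0 ≤ y) (hy' : y' ≤ 1)
    (hxx' : x ≤ x') (hyy' : y ≤ y') :
    boolMaxOp x y ≤ boolMaxOp x' y' := by
  rcases hx.eq_or_lt with rfl | hx
  · simpa using boolMaxOp_nonneg hxx' (hy.trans hyy') hy'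
  rcases hy.eq_or_lt with rfl | hy
  · simpa using boolMaxOp_nonneg (hx.le.trans hxx') hyy' hy'
  have hx' := hx.trans_le hxx'
  have hy'' := hy.trans_le hyy'
  rw [boolMaxOp_of_ne_zero hx.ne' hy.ne', boolMaxOp_of_ne_zero hx'.ne' hy''.ne']
  refine inv_anti₀ (inv_add_inv_sub_one_pos hx' hy'' hy') ?_
  linarith [inv_anti₀ hx hxx', inv_anti₀ hy hyy']

lemma boolMaxOp_assoc {x y z : ℝ} (hx : 0 ≤ x) (hy : 0 ≤ y) (hy1 : y ≤ 1) (hz : 0 ≤ z)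
    (hz1 : z ≤ 1) :
    boolMaxOp (boolMaxOp x y) z = boolMaxOp x (boolMaxOp y z) := by
  rcases hx.eq_or_lt with rfl | hx
  · simp
  rcases hy.eq_or_lt with rfl | hy
  · simp
  rcases hz.eq_or_lt with rfl | hz
  · simp
  have hxy := boolMaxOp_pos hx hy hy1
  have hyz := boolMaxOp_pos hy hz hz1
  rw [← inv_inj, inv_boolMaxOp hxy.ne' hz.ne', inv_boolMaxOp hx.ne' hyz.ne',
    inv_boolMaxOp hx.ne' hy.ne', inv_boolMaxOp hy.ne' hz.ne']
  ring

lemma continuousAt_boolMaxOp {p : ℝ × ℝ} (hx : p.1 ≠ 0) (hy : p.2 ≠ 0)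
    (h : p.1⁻¹ + p.2⁻¹ - 1 ≠ 0) :
    ContinuousAt (Function.uncurry boolMaxOp) p := by
  have hformula :
      (fun q : ℝ × ℝ ↦ (q.1⁻¹ + q.2⁻¹ - 1)⁻¹) =ᶠ[𝓝 p] Function.uncurry boolMaxOp := by
    filter_upwards [continuous_fst.continuousAt.eventually_ne hx,
      continuous_snd.continuousAt.eventually_ne hy] with q hq₁ hq₂
    exact (boolMaxOp_of_ne_zero hq₁ hq₂).symm
  refine ContinuousAt.congr ?_ hformula
  exact (((continuous_fst.continuousAt.inv₀ hx).add (continuous_snd.continuousAt.inv₀ hy)).sub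
    continuousAt_const).inv₀ h

lemma continuousOn_boolMaxOp :
    ContinuousOn (Function.uncurry boolMaxOp) (Icc 0 1 ×ˢ Icc 0 1) := by
  rintro ⟨x, y⟩ hp
  obtain ⟨⟨hx, hx1⟩, hy, hy1⟩ : (0 ≤ x ∧ x ≤ 1) ∧ 0 ≤ y ∧ y ≤ 1 := hp
  rcases hx.eq_or_lt with rfl | hx
  · rw [ContinuousWithinAt, Function.uncurry_apply_pair, boolMaxOp_zero_left]
    refine tendsto_of_tendsto_of_tendsto_of_le_of_le' tendsto_const_nhds
      (continuous_fst.continuousWithinAt (x := ((0 : ℝ), y))) ?_ ?_ <;>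
    filter_upwards [self_mem_nhdsWithin] with q ⟨⟨hq₁, _⟩, hq₂, hq₂'⟩
    exacts [boolMaxOp_nonneg hq₁ hq₂ hq₂', boolMaxOp_le_left hq₁ hq₂ hq₂']
  rcases hy.eq_or_lt with rfl | hy
  · rw [ContinuousWithinAt, Function.uncurry_apply_pair, boolMaxOp_zero_right]
    refine tendsto_of_tendsto_of_tendsto_of_le_of_le' tendsto_const_nhds
      (continuous_snd.continuousWithinAt (x := (x, (0 : ℝ)))) ?_ ?_ <;>
    filter_upwards [self_mem_nhdsWithin] with q ⟨⟨hq₁, hq₁'⟩, hq₂, hq₂'⟩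
    exacts [boolMaxOp_nonneg hq₁ hq₂ hq₂', boolMaxOp_le_right hq₁ hq₁' hq₂]
  exact (continuousAt_boolMaxOp hx.ne' hy.ne' (inv_add_inv_sub_one_pos hx hy hy1).ne')
    |>.continuousWithinAt

lemma Filter.Tendsto.boolMaxOp {α : Type*} {l : Filter α} {f g : α → ℝ} {a b : ℝ}
    (hf : Tendsto f l (𝓝 a)) (hg : Tendsto g l (𝓝 b))
    (hf01 : ∀ t, f t ∈ Icc 0 1) (hg01 : ∀ t, g t ∈ Icc 0 1)
    (ha : a ∈ Icc 0 1) (hb : b ∈ Icc 0 1) :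
    Tendsto (fun t ↦ boolMaxOp (f t) (g t)) l (𝓝 (boolMaxOp a b)) :=
  (continuousOn_boolMaxOp (a, b) ⟨ha, hb⟩).tendsto.comp <|
    tendsto_nhdsWithin_iff.2 ⟨hf.prodMk_nhds hg, .of_forall fun t ↦ ⟨hf01 t, hg01 t⟩⟩

namespace ProbabilityTheory

lemma cdf_mem_Icc (μ : Measure ℝ) (t : ℝ) : cdf μ t ∈ Icc 0 1 :=
  ⟨cdf_nonneg μ t, cdf_le_one μ t⟩

noncomputable def boolMaxCDF (μ ν : Measure ℝ) : StieltjesFunction ℝ where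
  toFun t := boolMaxOp (cdf μ t) (cdf ν t)
  mono' _ _ h := boolMaxOp_mono (cdf_nonneg μ _) (cdf_nonneg ν _) (cdf_le_one ν _)
    (monotone_cdf μ h) (monotone_cdf ν h)
  right_continuous' t := ((cdf μ).right_continuous t).boolMaxOp ((cdf ν).right_continuous t)
    (cdf_mem_Icc μ) (cdf_mem_Icc ν) (cdf_mem_Icc μ t) (cdf_mem_Icc ν t)

variable (μ ν : Measure ℝ)

lemma boolMaxCDF_apply (t : ℝ) : boolMaxCDF μ ν t = boolMaxOp (cdf μ t) (cdf ν t) := rfl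

lemma tendsto_boolMaxCDF_atBot : Tendsto (boolMaxCDF μ ν) atBot (𝓝 0) := by
  have h := (tendsto_cdf_atBot μ).boolMaxOp (tendsto_cdf_atBot ν) (cdf_mem_Icc μ)
    (cdf_mem_Icc ν) (left_mem_Icc.2 zero_le_one) (left_mem_Icc.2 zero_le_one)
  rwa [boolMaxOp_zero_left] at h

lemma tendsto_boolMaxCDF_atTop : Tendsto (boolMaxCDF μ ν) atTop (𝓝 1) := by
  have h := (tendsto_cdf_atTop μ).boolMaxOp (tendsto_cdf_atTop ν) (cdf_mem_Icc μ)
    (cdf_mem_Icc ν) (right_mem_Icc.2 zero_le_one) (right_mem_Icc.2 zero_le_one)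
  rwa [boolMaxOp_of_ne_zero one_ne_zero one_ne_zero, inv_one, add_sub_cancel_right,
    inv_one] at h

instance : IsProbabilityMeasure (boolMaxCDF μ ν).measure :=
  (boolMaxCDF μ ν).isProbabilityMeasure (tendsto_boolMaxCDF_atBot μ ν)
    (tendsto_boolMaxCDF_atTop μ ν)

lemma boolMaxCDF_measureReal_Iic [IsProbabilityMeasure μ] [IsProbabilityMeasure ν] (t : ℝ) :
    (boolMaxCDF μ ν).measure.real (Iic t) = boolMaxOp (μ.real (Iic t)) (ν.real (Iic t)) := by
  rw [measureReal_def, (boolMaxCDF μ ν).measure_Iic (tendsto_boolMaxCDF_atBot μ ν), sub_zero,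
    ENNReal.toReal_ofReal, boolMaxCDF_apply, cdf_eq_real, cdf_eq_real]
  exact boolMaxOp_nonneg (cdf_nonneg μ t) (cdf_nonneg ν t) (cdf_le_one ν t)

variable {μ} in
lemma boolMaxCDF_measure_Iio_eq_zero [IsProbabilityMeasure μ] {a : ℝ} (hμ : μ (Iio a) = 0) :
    (boolMaxCDF μ ν).measure (Iio a) = 0 := by
  have hvanish : ∀ t < a, boolMaxCDF μ ν t = 0 := fun t ht ↦ by
    have : μ (Iic t) = 0 := measure_mono_null (Iic_subset_Iio.2 ht) hμ
    rw [boolMaxCDF_apply, cdf_eq_real, measureReal_def, this, ENNReal.toReal_zero,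
      boolMaxOp_zero_left]
  have hleftLim : Function.leftLim (boolMaxCDF μ ν) a = 0 := by
    refine leftLim_eq_of_tendsto (tendsto_const_nhds.congr' ?_)
    exact eventually_nhdsWithin_of_forall fun t ht ↦ (hvanish t ht).symm
  rw [(boolMaxCDF μ ν).measure_Iio (tendsto_boolMaxCDF_atBot μ ν), hleftLim, sub_zero,
    ENNReal.ofReal_zero]

end ProbabilityTheory

theorem boolMax_wellDefined_comm_assoc_general (μ ν : Measure ℝ)
    [IsProbabilityMeasure μ] [IsProbabilityMeasure ν]
    (hμ : μ (Set.Iio 0) = 0) :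
    (∃ ρ : Measure ℝ, IsProbabilityMeasure ρ ∧ ρ (Set.Iio 0) = 0 ∧
      ∀ t : ℝ, 0 ≤ t →
        (ρ (Set.Iic t)).toReal =
          boolMaxOp ((μ (Set.Iic t)).toReal) ((ν (Set.Iic t)).toReal)) ∧
    (∀ x y : ℝ, boolMaxOp x y = boolMaxOp y x) ∧
    (∀ x y z : ℝ, x ∈ Set.Icc (0:ℝ) 1 → y ∈ Set.Icc (0:ℝ) 1 → z ∈ Set.Icc (0:ℝ) 1 →
      boolMaxOp (boolMaxOp x y) z = boolMaxOp x (boolMaxOp y z)) :=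
  ⟨⟨(ProbabilityTheory.boolMaxCDF μ ν).measure, inferInstance,
      ProbabilityTheory.boolMaxCDF_measure_Iio_eq_zero ν hμ,
      fun t _ ↦ ProbabilityTheory.boolMaxCDF_measureReal_Iic μ ν t⟩,
    boolMaxOp_comm,
    fun _ _ _ hx hy hz ↦ boolMaxOp_assoc hx.1 hy.1 hy.2 hz.1 hz.2⟩

/-- The boolean max-convolution of two distribution functions of probability measures
on `[0,∞)` is again such a distribution function, and the operation is commutative
and associative (on distribution-function values, which lie in `[0,1]`). -/
theorem boolMax_wellDefined_comm_assoc (μ ν : Measure ℝ)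
    [IsProbabilityMeasure μ] [IsProbabilityMeasure ν]
    (hμ : μ (Set.Iio 0) = 0) (hν : ν (Set.Iio 0) = 0) :
    (∃ ρ : Measure ℝ, IsProbabilityMeasure ρ ∧ ρ (Set.Iio 0) = 0 ∧
      ∀ t : ℝ, 0 ≤ t →
        (ρ (Set.Iic t)).toReal =
          boolMaxOp ((μ (Set.Iic t)).toReal) ((ν (Set.Iic t)).toReal)) ∧
    (∀ x y : ℝ, boolMaxOp x y = boolMaxOp y x) ∧
    (∀ x y z : ℝ, x ∈ Set.Icc (0:ℝ) 1 → y ∈ Set.Icc (0:ℝ) 1 → z ∈ Set.Icc (0:ℝ) 1 →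
      boolMaxOp (boolMaxOp x y) z = boolMaxOp x (boolMaxOp y z)) :=
  boolMax_wellDefined_comm_assoc_general μ ν hμ
end

section
/- The max-boolean-to-free map Λ_{bf}^∨ defined by Λ_{bf}^∨(μ)([0,t]) = max{2 − 1/μ([0,t]), 0} (value 0 when μ([0,t]) = 0) satisfies Λ_{bf}^∨(μ ∪∨ ν) = Λ_{bf}^∨(μ) ⊞∨ Λ_{bf}^∨(ν), i.e., it is a homomorphism from boolean max-convolution to free max-convolution; moreover Λ_{bf}^∨ = Λ^∨ ∘ X^∨. -/
open MeasureTheory Set Filter Real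

/-- The map on distribution-function values associated with `Λ_{bf}^∨`:
`x ↦ max{2 - 1/x, 0}`, with value `0` when `x = 0`. -/
noncomputable def lambdaBFDF (x : ℝ) : ℝ :=
  if x = 0 then 0 else max (2 - 1 / x) 0

lemma lambdaBFDF_le_one {x : ℝ} (hx0 : 0 ≤ x) (hx1 : x ≤ 1) : lambdaBFDF x ≤ 1 := by
  unfold lambdaBFDF
  split_ifs with h
  · norm_num
  · have hx : 0 < x := lt_of_le_of_ne hx0 (Ne.symm h)
    have : (1 : ℝ) ≤ 1 / x := one_le_one_div hx hx1
    have : 2 - 1 / x ≤ 1 := by linarith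
    exact max_le this (by norm_num)

lemma lambdaBFDF_nonneg (x : ℝ) : 0 ≤ lambdaBFDF x := by
  unfold lambdaBFDF; split_ifs <;> simp

lemma key_pointwise {x y : ℝ} (hx0 : 0 ≤ x) (hx1 : x ≤ 1) (hy0 : 0 ≤ y) (hy1 : y ≤ 1) :
    lambdaBFDF (boolMaxOp x y) = max (lambdaBFDF x + lambdaBFDF y - 1) 0 := by
  have hBF0 : lambdaBFDF 0 = 0 := if_pos rfl
  rcases eq_or_lt_of_le hx0 with hx | hx
  · have hxz : x = 0 := hx.symm
    have hy' := lambdaBFDF_le_one hy0 hy1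
    have hy'' := lambdaBFDF_nonneg y
    rw [hxz, boolMaxOp, if_pos (Or.inl rfl), hBF0,
      max_eq_right (by linarith)]
  rcases eq_or_lt_of_le hy0 with hy | hy
  · have hyz : y = 0 := hy.symm
    have hx' := lambdaBFDF_le_one hx0 hx1
    have hx'' := lambdaBFDF_nonneg x
    rw [hyz, boolMaxOp, if_pos (Or.inr rfl), hBF0,
      max_eq_right (by linarith)]
  · have hxne : x ≠ 0 := ne_of_gt hx
    have hyne : y ≠ 0 := ne_of_gt hy
    have hu : (1 : ℝ) ≤ 1 / x := one_le_one_div hx hx1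
    have hv : (1 : ℝ) ≤ 1 / y := one_le_one_div hy hy1
    have hs : (0 : ℝ) < 1 / x + 1 / y - 1 := by linarith
    rw [boolMaxOp, if_neg (by push_neg; exact ⟨hxne, hyne⟩)]
    have hzne : (1 / x + 1 / y - 1)⁻¹ ≠ 0 := inv_ne_zero (ne_of_gt hs)
    rw [lambdaBFDF, if_neg hzne, lambdaBFDF, if_neg hxne, lambdaBFDF, if_neg hyne,
      one_div, inv_inv]
    rcases le_total (2 - 1 / x) 0 with h1 | h1
    · rw [max_eq_right h1, max_eq_right (show 2 - (1 / x + 1 / y - 1) ≤ 0 by linarith),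
        max_eq_right (show 0 + max (2 - 1 / y) 0 - 1 ≤ 0 by
          have := max_le (show 2 - 1 / y ≤ 1 by linarith) (show (0:ℝ) ≤ 1 by norm_num)
          linarith)]
    rcases le_total (2 - 1 / y) 0 with h2 | h2
    · rw [max_eq_right h2, max_eq_right (show 2 - (1 / x + 1 / y - 1) ≤ 0 by linarith),
        max_eq_right (show max (2 - 1 / x) 0 + 0 - 1 ≤ 0 by
          have := max_le (show 2 - 1 / x ≤ 1 by linarith) (show (0:ℝ) ≤ 1 by norm_num)
          linarith)]
    · rw [max_eq_left h1, max_eq_left h2]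
      congr 1
      ring

/-- `Λ_{bf}^∨` is a homomorphism from boolean max-convolution to free
max-convolution, and `Λ_{bf}^∨ = Λ^∨ ∘ X^∨`. -/
theorem lambdaBF_hom (μ ν ρ : Measure ℝ)
    [IsProbabilityMeasure μ] [IsProbabilityMeasure ν] [IsProbabilityMeasure ρ]
    (hμ : μ (Set.Iio 0) = 0) (hν : ν (Set.Iio 0) = 0) (hρ : ρ (Set.Iio 0) = 0)
    (hconv : ∀ t : ℝ, 0 ≤ t →
      (ρ (Set.Iic t)).toReal = boolMaxOp ((μ (Set.Iic t)).toReal) ((ν (Set.Iic t)).toReal)) :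
    (∀ t : ℝ, 0 ≤ t →
      lambdaBFDF ((ρ (Set.Iic t)).toReal) =
        max (lambdaBFDF ((μ (Set.Iic t)).toReal) +
             lambdaBFDF ((ν (Set.Iic t)).toReal) - 1) 0) ∧
    (∀ x : ℝ, lambdaBFDF x = lambdaMaxDF (chiMaxDF x)) := by
  constructor
  · intro t ht
    have hμ1 : ((μ (Set.Iic t)).toReal) ≤ 1 := by
      have h := prob_le_one (μ := μ) (s := Set.Iic t)
      simpa using ENNReal.toReal_mono (by norm_num) h
    have hν1 : ((ν (Set.Iic t)).toReal) ≤ 1 := by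
      have h := prob_le_one (μ := ν) (s := Set.Iic t)
      simpa using ENNReal.toReal_mono (by norm_num) h
    rw [hconv t ht]
    exact key_pointwise ENNReal.toReal_nonneg hμ1 ENNReal.toReal_nonneg hν1
  · intro x
    by_cases hx : x = 0
    · simp [lambdaBFDF, chiMaxDF, lambdaMaxDF, hx]
    · rw [lambdaBFDF, if_neg hx, chiMaxDF, if_neg hx, lambdaMaxDF,
        if_neg (Real.exp_ne_zero _), Real.log_exp]
      congr 1
      ring
end

section
/- For a Borel probability measure μ on [0,∞), the function t ↦ 1 + ψ_μ(-1/t), where ψ_μ(s) = ∫ su/(1-su) dμ(u), is a nondecreasing right-continuous function on (0,∞) with limit 1 as t → ∞ and limit μ({0}) as t → 0⁺; hence it is the distribution function of a probability measure Ξ(μ) on [0,∞) with Ξ(μ)({0}) = μ({0}). -/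
open MeasureTheory Set Filter Topology

/-!
For `t > 0` and `u ≥ 0` the integrand equals `t / (t + u) - 1`, so the function is
`t ↦ ∫ t / (t + u) dμ(u)`. The kernel `t / (t + u)` is nondecreasing in `t`, bounded by `1`,
and tends to `1` as `t → ∞` and to `𝟙{u = 0}` as `t → 0⁺`, so dominated convergence gives the
analytic properties. Setting the function to `μ{0}` at `0` and to `0` on `(-∞, 0)` yields a
Stieltjes function, whose measure is `Ξ(μ)`.
-/

section Extension

variable {f : ℝ → ℝ} {a c t : ℝ}

lemma MonotoneOn.le_of_tendsto_nhdsGT (hf : MonotoneOn f (Ioi a))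
    (hc : Tendsto f (𝓝[>] a) (𝓝 c)) (ht : a < t) : c ≤ f t :=
  le_of_tendsto hc <| mem_of_superset (Ioo_mem_nhdsGT ht) fun _ hs =>
    hf hs.1 ht hs.2.le

noncomputable def extendIoi (f : ℝ → ℝ) (c : ℝ) (t : ℝ) : ℝ :=
  if t < 0 then 0 else if t = 0 then c else f t

lemma extendIoi_of_neg (ht : t < 0) : extendIoi f c t = 0 := if_pos ht

@[simp] lemma extendIoi_zero : extendIoi f c 0 = c := by simp [extendIoi]

lemma extendIoi_of_pos (ht : 0 < t) : extendIoi f c t = f t := by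
  simp [extendIoi, ht.not_gt, ht.ne']

lemma eqOn_extendIoi : EqOn (extendIoi f c) f (Ioi 0) := fun _ ht => extendIoi_of_pos ht

lemma extendIoi_le_of_nonpos (hc : 0 ≤ c) (ht : t ≤ 0) : extendIoi f c t ≤ c := by
  rcases ht.lt_or_eq with ht | rfl
  · rw [extendIoi_of_neg ht]; exact hc
  · simp

lemma monotone_extendIoi (hc : 0 ≤ c) (hf : MonotoneOn f (Ioi 0))
    (h0 : Tendsto f (𝓝[>] 0) (𝓝 c)) : Monotone (extendIoi f c) := by
  intro s t hst
  rcases lt_or_ge 0 t with ht | ht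
  · rw [extendIoi_of_pos ht]
    rcases lt_or_ge 0 s with hs | hs
    · rw [extendIoi_of_pos hs]; exact hf hs ht hst
    · exact (extendIoi_le_of_nonpos hc hs).trans (hf.le_of_tendsto_nhdsGT h0 ht)
  rcases ht.lt_or_eq with ht | rfl
  · rw [extendIoi_of_neg ht, extendIoi_of_neg (hst.trans_lt ht)]
  · rw [extendIoi_zero]; exact extendIoi_le_of_nonpos hc hst

lemma continuousWithinAt_Ici_extendIoi
    (hf : ∀ t, 0 < t → ContinuousWithinAt f (Ici t) t)
    (h0 : Tendsto f (𝓝[>] 0) (𝓝 c)) (x : ℝ) :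
    ContinuousWithinAt (extendIoi f c) (Ici x) x := by
  rcases lt_trichotomy x 0 with hx | rfl | hx
  · refine (continuousAt_const (y := (0 : ℝ))).continuousWithinAt.congr_of_eventuallyEq ?_
      (extendIoi_of_neg hx)
    filter_upwards [nhdsWithin_le_nhds (Iio_mem_nhds hx)] with y hy
    exact extendIoi_of_neg hy
  · rw [← continuousWithinAt_Ioi_iff_Ici, ContinuousWithinAt, extendIoi_zero]
    exact h0.congr' (eventuallyEq_nhdsWithin_of_eqOn eqOn_extendIoi.symm)
  · refine (hf x hx).congr_of_eventuallyEq ?_ (extendIoi_of_pos hx)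
    filter_upwards [nhdsWithin_le_nhds (Ioi_mem_nhds hx)] with y hy
    exact extendIoi_of_pos hy

noncomputable def StieltjesFunction.ofMonotoneOnIoi (hc : 0 ≤ c) (hf : MonotoneOn f (Ioi 0))
    (hcont : ∀ t, 0 < t → ContinuousWithinAt f (Ici t) t)
    (h0 : Tendsto f (𝓝[>] 0) (𝓝 c)) : StieltjesFunction ℝ :=
  ⟨extendIoi f c, monotone_extendIoi hc hf h0, continuousWithinAt_Ici_extendIoi hcont h0⟩

theorem exists_isProbabilityMeasure_of_monotoneOn_Ioi (hc : 0 ≤ c)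
    (hf : MonotoneOn f (Ioi 0)) (hcont : ∀ t, 0 < t → ContinuousWithinAt f (Ici t) t)
    (h0 : Tendsto f (𝓝[>] 0) (𝓝 c)) (htop : Tendsto f atTop (𝓝 1)) :
    ∃ ξ : Measure ℝ, IsProbabilityMeasure ξ ∧ ξ (Iio 0) = 0 ∧
      (∀ t, 0 < t → ξ.real (Iic t) = f t) ∧ ξ {0} = ENNReal.ofReal c := by
  set F := StieltjesFunction.ofMonotoneOnIoi hc hf hcont h0
  have hF : (F : ℝ → ℝ) = extendIoi f c := rfl
  have hneg : ∀ᶠ t in 𝓝[<] 0, F t = 0 :=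
    eventually_nhdsWithin_of_forall fun _ ht => extendIoi_of_neg ht
  have hbot : Tendsto F atBot (𝓝 0) :=
    tendsto_const_nhds.congr' <|
      (eventually_lt_atBot 0).mono fun _ ht => (extendIoi_of_neg ht).symm
  have htop' : Tendsto F atTop (𝓝 1) :=
    htop.congr' <| (eventually_gt_atTop 0).mono fun _ ht => (extendIoi_of_pos ht).symm
  have hleft : Function.leftLim F 0 = 0 :=
    leftLim_eq_of_tendsto (tendsto_const_nhds.congr' (hneg.mono fun _ h => h.symm))
  refine ⟨F.measure, F.isProbabilityMeasure hbot htop', ?_, fun t ht => ?_, ?_⟩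
  · simp [F.measure_Iio hbot, hleft]
  · rw [measureReal_def, F.measure_Iic hbot, sub_zero, hF, extendIoi_of_pos ht,
      ENNReal.toReal_ofReal (hc.trans (hf.le_of_tendsto_nhdsGT h0 ht))]
  · rw [F.measure_singleton, hleft, sub_zero, hF, extendIoi_zero]

end Extension

section StieltjesTransform

variable {μ : Measure ℝ} {t : ℝ}

lemma norm_div_add_le_one {u : ℝ} (ht : 0 < t) (hu : 0 ≤ u) : ‖t / (t + u)‖ ≤ 1 := by
  rw [Real.norm_of_nonneg (by positivity), div_le_one (by positivity)]
  linarith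

lemma integrable_div_add [IsFiniteMeasure μ] (hμ : ∀ᵐ u ∂μ, 0 ≤ u) (ht : 0 < t) :
    Integrable (fun u => t / (t + u)) μ :=
  (integrable_const 1).mono' (Measurable.aestronglyMeasurable (by fun_prop))
    (hμ.mono fun _ hu => norm_div_add_le_one ht hu)

lemma monotoneOn_integral_div_add [IsFiniteMeasure μ] (hμ : ∀ᵐ u ∂μ, 0 ≤ u) :
    MonotoneOn (fun t => ∫ u, t / (t + u) ∂μ) (Ioi 0) := by
  intro s hs t ht hst
  refine integral_mono_ae (integrable_div_add hμ hs) (integrable_div_add hμ ht) ?_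
  filter_upwards [hμ] with u hu
  rw [div_le_div_iff₀ (by linarith [mem_Ioi.1 hs]) (by linarith [mem_Ioi.1 ht])]
  nlinarith

lemma tendsto_integral_div_add [IsFiniteMeasure μ] (hμ : ∀ᵐ u ∂μ, 0 ≤ u) {l : Filter ℝ}
    [l.IsCountablyGenerated] (hl : ∀ᶠ t in l, 0 < t) {φ : ℝ → ℝ}
    (hφ : ∀ᵐ u ∂μ, Tendsto (fun t => t / (t + u)) l (𝓝 (φ u))) :
    Tendsto (fun t => ∫ u, t / (t + u) ∂μ) l (𝓝 (∫ u, φ u ∂μ)) :=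
  tendsto_integral_filter_of_dominated_convergence (fun _ => 1)
    (.of_forall fun _ => Measurable.aestronglyMeasurable (by fun_prop))
    (hl.mono fun _ ht => hμ.mono fun _ hu => norm_div_add_le_one ht hu) (integrable_const 1) hφ

lemma continuousAt_integral_div_add [IsFiniteMeasure μ] (hμ : ∀ᵐ u ∂μ, 0 ≤ u) (ht : 0 < t) :
    ContinuousAt (fun t => ∫ u, t / (t + u) ∂μ) t :=
  tendsto_integral_div_add hμ (eventually_gt_nhds ht) <| hμ.mono fun _ hu =>
    (continuousAt_id.div (continuousAt_id.add continuousAt_const)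
      (add_pos_of_pos_of_nonneg ht hu).ne').tendsto

lemma tendsto_integral_div_add_atTop [IsFiniteMeasure μ] (hμ : ∀ᵐ u ∂μ, 0 ≤ u) :
    Tendsto (fun t => ∫ u, t / (t + u) ∂μ) atTop (𝓝 (μ.real univ)) := by
  have hlim : ∀ u : ℝ, Tendsto (fun t => t / (t + u)) atTop (𝓝 1) := fun u => by
    have h : Tendsto (fun t => 1 - u / (t + u)) atTop (𝓝 (1 - 0)) :=
      tendsto_const_nhds.sub
        (tendsto_const_nhds.div_atTop (tendsto_atTop_add_const_right _ u tendsto_id))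
    rw [sub_zero] at h
    refine h.congr' ?_
    filter_upwards [eventually_gt_atTop (-u)] with t ht
    rw [one_sub_div (by linarith), add_sub_cancel_right]
  simpa using tendsto_integral_div_add hμ (eventually_gt_atTop 0) (.of_forall hlim)

lemma tendsto_integral_div_add_nhdsGT_zero [IsFiniteMeasure μ] (hμ : ∀ᵐ u ∂μ, 0 ≤ u) :
    Tendsto (fun t => ∫ u, t / (t + u) ∂μ) (𝓝[>] 0) (𝓝 (μ.real {0})) := by
  have hlim : ∀ u, 0 ≤ u → Tendsto (fun t => t / (t + u)) (𝓝[>] 0)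
      (𝓝 (({0} : Set ℝ).indicator 1 u)) := by
    intro u hu
    rcases hu.eq_or_lt with rfl | hu
    · rw [indicator_of_mem (mem_singleton _), Pi.one_apply]
      exact tendsto_const_nhds.congr' <| eventually_nhdsWithin_of_forall fun t ht =>
        by simp [div_self (ne_of_gt (mem_Ioi.1 ht))]
    · rw [indicator_of_notMem (show u ∉ ({0} : Set ℝ) from hu.ne')]
      have hcont : ContinuousAt (fun t : ℝ => t / (t + u)) 0 :=
        continuousAt_id.div (continuousAt_id.add continuousAt_const) (by simpa using hu.ne')
      simpa using hcont.tendsto.mono_left nhdsWithin_le_nhds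
  have := tendsto_integral_div_add hμ self_mem_nhdsWithin (hμ.mono hlim)
  rwa [integral_indicator_one (measurableSet_singleton 0)] at this

lemma one_add_integral_eq_integral_div_add [IsProbabilityMeasure μ] (hμ : ∀ᵐ u ∂μ, 0 ≤ u)
    (ht : 0 < t) :
    1 + ∫ u, (-1 / t) * u / (1 - (-1 / t) * u) ∂μ = ∫ u, t / (t + u) ∂μ := by
  have hpoint : ∀ᵐ u ∂μ, (-1 / t) * u / (1 - (-1 / t) * u) = t / (t + u) - 1 := by
    filter_upwards [hμ] with u hu
    have hden : 1 - (-1 / t) * u = (t + u) / t := by field_simp; ring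
    have : t + u ≠ 0 := by positivity
    rw [hden]
    field_simp
    ring
  rw [integral_congr_ae hpoint, integral_sub (integrable_div_add hμ ht) (integrable_const 1)]
  simp

end StieltjesTransform

/-- The function `t ↦ 1 + ψ_μ(-1/t)` is a nondecreasing right-continuous function on
`(0,∞)` tending to `1` at `∞` and to `μ({0})` at `0⁺`, hence it is the distribution
function of a probability measure `Ξ(μ)` on `[0,∞)` with `Ξ(μ)({0}) = μ({0})`. -/
theorem xi_distribution_function (μ : Measure ℝ) [IsProbabilityMeasure μ]
    (hμ : μ (Set.Iio 0) = 0) :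
    MonotoneOn (fun t : ℝ => 1 + ∫ u, (-1 / t) * u / (1 - (-1 / t) * u) ∂μ)
      (Set.Ioi 0) ∧
    (∀ t : ℝ, 0 < t →
      ContinuousWithinAt (fun t : ℝ => 1 + ∫ u, (-1 / t) * u / (1 - (-1 / t) * u) ∂μ)
        (Set.Ici t) t) ∧
    Tendsto (fun t : ℝ => 1 + ∫ u, (-1 / t) * u / (1 - (-1 / t) * u) ∂μ)
      atTop (nhds 1) ∧
    Tendsto (fun t : ℝ => 1 + ∫ u, (-1 / t) * u / (1 - (-1 / t) * u) ∂μ)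
      (nhdsWithin 0 (Set.Ioi 0)) (nhds ((μ {0}).toReal)) ∧
    ∃ ξ : Measure ℝ, IsProbabilityMeasure ξ ∧ ξ (Set.Iio 0) = 0 ∧
      (∀ t : ℝ, 0 < t →
        (ξ (Set.Iic t)).toReal = 1 + ∫ u, (-1 / t) * u / (1 - (-1 / t) * u) ∂μ) ∧
      ξ {0} = μ {0} := by
  have h0 : ∀ᵐ u ∂μ, 0 ≤ u := ae_iff.2 (by simp only [not_le]; exact hμ)
  set Φ := fun t : ℝ => 1 + ∫ u, (-1 / t) * u / (1 - (-1 / t) * u) ∂μ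
  have hΦ : EqOn (fun t => ∫ u, t / (t + u) ∂μ) Φ (Ioi 0) := fun _ ht =>
    (one_add_integral_eq_integral_div_add h0 ht).symm
  have hmono : MonotoneOn Φ (Ioi 0) := (monotoneOn_integral_div_add h0).congr hΦ
  have hcont (t : ℝ) (ht : 0 < t) : ContinuousWithinAt Φ (Ici t) t :=
    ((continuousAt_integral_div_add h0 ht).congr
      (hΦ.eventuallyEq_of_mem (Ioi_mem_nhds ht))).continuousWithinAt
  have htop : Tendsto Φ atTop (𝓝 1) := by
    simpa using (tendsto_integral_div_add_atTop h0).congr'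
      (hΦ.eventuallyEq_of_mem (Ioi_mem_atTop 0))
  have hzero : Tendsto Φ (𝓝[>] 0) (𝓝 (μ {0}).toReal) :=
    (tendsto_integral_div_add_nhdsGT_zero h0).congr'
      (hΦ.eventuallyEq_of_mem self_mem_nhdsWithin)
  obtain ⟨ξ, hξ, hξ_neg, hξ_Iic, hξ_zero⟩ := exists_isProbabilityMeasure_of_monotoneOn_Ioi
    ENNReal.toReal_nonneg hmono hcont hzero htop
  refine ⟨hmono, hcont, htop, hzero, ξ, hξ, hξ_neg, hξ_Iic, ?_⟩
  rw [hξ_zero, ENNReal.ofReal_toReal (measure_ne_top μ _)]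
end
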